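/- arXiv:1912.07507 — 5 statements merged into one kernel-verified Lean document; each statement's English description precedes it below -/
import Mathlib

section
/- The function ω : ℝ → ℝ defined by ω(ρ) = √(2(2ρ−1)(2ρ − 2√(ρ(ρ−1)) − 1)) is monotone decreasing (antitone) on the interval [1, ∞); that is, for all real ρ₁, ρ₂ with 1 ≤ ρ₁ ≤ ρ₂, one has ω(ρ₂) ≤ ω(ρ₁). -/
/-!
Put `t = 2ρ - 1 ≥ 1`. Then `2√(ρ(ρ-1)) = √(t² - 1)`, and since `(t - √(t²-1))(t + √(t²-1)) = 1`,
`ω(ρ)² = 2t(t - √(t²-1)) = 2 / (1 + √(1 - t⁻²))`, which is visibly decreasing in `t`.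
-/

noncomputable def omega (ρ : ℝ) : ℝ :=
  Real.sqrt (2 * (2 * ρ - 1) * (2 * ρ - 2 * Real.sqrt (ρ * (ρ - 1)) - 1))

open Real

theorem two_mul_sqrt_mul_sub_one (ρ : ℝ) :
    2 * √(ρ * (ρ - 1)) = √((2 * ρ - 1) ^ 2 - 1) := by
  rw [show (2 * ρ - 1) ^ 2 - 1 = 2 ^ 2 * (ρ * (ρ - 1)) by ring,
    sqrt_mul (by norm_num : (0 : ℝ) ≤ 2 ^ 2), sqrt_sq (by norm_num : (0 : ℝ) ≤ 2)]

theorem mul_sub_sqrt_sq_sub_one {t : ℝ} (ht : 1 ≤ t) :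
    t * (t - √(t ^ 2 - 1)) = (1 + √(1 - (t ^ 2)⁻¹))⁻¹ := by
  have ht0 : 0 < t := by linarith
  have hr : √(t ^ 2 - 1) ^ 2 = t ^ 2 - 1 := sq_sqrt (by nlinarith)
  have hr0 : 0 ≤ √(t ^ 2 - 1) := sqrt_nonneg _
  have hquot : √(1 - (t ^ 2)⁻¹) = √(t ^ 2 - 1) / t := by
    rw [show 1 - (t ^ 2)⁻¹ = (t ^ 2 - 1) / t ^ 2 by field_simp, sqrt_div' _ (sq_nonneg t),
      sqrt_sq ht0.le]
  rw [hquot]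
  field_simp
  nlinarith

theorem omega_eq_of_one_le {ρ : ℝ} (hρ : 1 ≤ ρ) :
    omega ρ = √(2 * (1 + √(1 - ((2 * ρ - 1) ^ 2)⁻¹))⁻¹) := by
  rw [← mul_sub_sqrt_sq_sub_one (by linarith), ← two_mul_sqrt_mul_sub_one, omega]
  ring_nf

theorem omega_antitone :
    ∀ ρ₁ ρ₂ : ℝ, 1 ≤ ρ₁ → ρ₁ ≤ ρ₂ → omega ρ₂ ≤ omega ρ₁ := by
  intro ρ₁ ρ₂ h₁ h₁₂
  have ht : 1 ≤ 2 * ρ₁ - 1 := by linarith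
  rw [omega_eq_of_one_le h₁, omega_eq_of_one_le (h₁.trans h₁₂)]
  gcongr
end

section
/- For every real ρ ≥ 1.6, one has 2ρ > 3·ω(ρ), where ω(ρ) = √(2(2ρ−1)(2ρ − 2√(ρ(ρ−1)) − 1)). -/
open Real

lemma omega_sq {ρ : ℝ} (hρ : 1 ≤ ρ) :
    omega ρ ^ 2 = 2 * (2 * ρ - 1) / (2 * ρ - 1 + 2 * √(ρ * (ρ - 1))) := by
  set s := √(ρ * (ρ - 1)) with hs
  have hs_sq : s ^ 2 = ρ * (ρ - 1) := sq_sqrt (by nlinarith)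
  have hconj_pos : 0 < 2 * ρ - 1 + 2 * s := by linarith [sqrt_nonneg (ρ * (ρ - 1))]
  have hinner : 2 * ρ - 2 * s - 1 = 1 / (2 * ρ - 1 + 2 * s) := by
    field_simp
    linear_combination -4 * hs_sq
  have harg_nonneg : 0 ≤ 2 * (2 * ρ - 1) * (2 * ρ - 2 * s - 1) := by
    rw [hinner]
    exact mul_nonneg (by linarith) (one_div_pos.2 hconj_pos).le
  rw [omega, ← hs, sq_sqrt harg_nonneg, hinner]
  ring

lemma three_fifths_mul_le_sqrt {ρ : ℝ} (hρ : 25 / 16 ≤ ρ) : 3 * ρ / 5 ≤ √(ρ * (ρ - 1)) :=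
  le_sqrt_of_sq_le (by nlinarith)

lemma omega_sq_le {ρ : ℝ} (hρ : 25 / 16 ≤ ρ) :
    omega ρ ^ 2 ≤ 10 * (2 * ρ - 1) / (16 * ρ - 5) := by
  rw [omega_sq (by linarith)]
  calc 2 * (2 * ρ - 1) / (2 * ρ - 1 + 2 * √(ρ * (ρ - 1)))
      ≤ 2 * (2 * ρ - 1) / (2 * ρ - 1 + 2 * (3 * ρ / 5)) := by
        gcongr
        · linarith
        · linarith
        · exact three_fifths_mul_le_sqrt hρ
    _ = 10 * (2 * ρ - 1) / (16 * ρ - 5) := by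
        field_simp
        ring

theorem two_rho_gt_three_omega :
    ∀ ρ : ℝ, (1.6 : ℝ) ≤ ρ → 2 * ρ > 3 * omega ρ := by
  intro ρ hρ
  norm_num at hρ
  have hden : 0 < 16 * ρ - 5 := by linarith
  have h9 : (3 * omega ρ) ^ 2 < (2 * ρ) ^ 2 := by
    calc (3 * omega ρ) ^ 2 = 9 * omega ρ ^ 2 := by ring
      _ ≤ 9 * (10 * (2 * ρ - 1) / (16 * ρ - 5)) := by gcongr; exact omega_sq_le (by linarith)
      _ < (2 * ρ) ^ 2 := by
        rw [← mul_div_assoc, div_lt_iff₀ hden]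
        nlinarith [mul_nonneg (sub_nonneg.2 hρ) (sub_nonneg.2 hρ)]
  exact lt_of_pow_lt_pow_left₀ 2 (by linarith) h9
end

section
/- For every real ρ ≥ 1.6, one has arccos(1/ω(ρ)) < π/4, where ω(ρ) = √(2(2ρ−1)(2ρ − 2√(ρ(ρ−1)) − 1)). In particular the angle 2·arccos(1/ω(ρ)) is strictly less than π/2. -/
open Real

theorem Real.arccos_lt_pi_div_four {x : ℝ} : arccos x < π / 4 ↔ √2 / 2 < x := by
  rw [arccos, ← sin_pi_div_four,
    ← lt_arcsin_iff_sin_lt' ⟨by linarith [pi_pos], by linarith [pi_pos]⟩]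
  constructor <;> intro <;> linarith

theorem Real.arccos_one_div_lt_pi_div_four {x : ℝ} (hx₀ : 0 < x) (hx : x < √2) :
    arccos (1 / x) < π / 4 := by
  have h2 : (0 : ℝ) < √2 := by positivity
  rw [arccos_lt_pi_div_four, lt_one_div (by positivity) hx₀, one_div_div, div_sqrt]
  exact hx

section Omega

variable {ρ : ℝ}

theorem two_mul_sqrt_mul_sub_one_lt (hρ : 1 ≤ ρ) : 2 * √(ρ * (ρ - 1)) < 2 * ρ - 1 := by
  have : √(ρ * (ρ - 1)) < ρ - 1 / 2 := (sqrt_lt' (by linarith)).2 (by nlinarith)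
  linarith

theorem omega_radicand_pos (hρ : 1 ≤ ρ) :
    0 < 2 * (2 * ρ - 1) * (2 * ρ - 2 * √(ρ * (ρ - 1)) - 1) := by
  have := two_mul_sqrt_mul_sub_one_lt hρ
  exact mul_pos (by linarith) (by linarith)

theorem omega_pos (hρ : 1 ≤ ρ) : 0 < omega ρ :=
  sqrt_pos.2 (omega_radicand_pos hρ)

theorem omega_lt_sqrt_two (hρ : 1 < ρ) : omega ρ < √2 := by
  have hs : 0 < √(ρ * (ρ - 1)) := sqrt_pos.2 (by nlinarith)
  have hs_sq : √(ρ * (ρ - 1)) ^ 2 = ρ * (ρ - 1) := sq_sqrt (by nlinarith)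
  have hgap := two_mul_sqrt_mul_sub_one_lt hρ.le
  refine sqrt_lt_sqrt (omega_radicand_pos hρ.le).le ?_
  nlinarith [mul_pos hs (sub_pos.2 hgap)]

end Omega

theorem arccos_inv_omega_lt_pi_div_four :
    ∀ ρ : ℝ, (1.6 : ℝ) ≤ ρ →
      Real.arccos (1 / omega ρ) < Real.pi / 4 ∧
      2 * Real.arccos (1 / omega ρ) < Real.pi / 2 := by
  intro ρ hρ
  have hρ₁ : 1 < ρ := by norm_num at hρ; linarith
  have h := arccos_one_div_lt_pi_div_four (omega_pos hρ₁.le) (omega_lt_sqrt_two hρ₁)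
  exact ⟨h, by linarith⟩
end

section
/- Let n ≥ 1, let z₀, z₁ be distinct points of Euclidean space ℝⁿ, let h = ‖z₁ − z₀‖, and let φ be a real number with 0 ≤ φ < π/2. Let x ∈ ℝⁿ be a point such that (x = z₀ or the undirected angle between the vectors x − z₀ and z₁ − z₀ is at most φ) and (x = z₁ or the undirected angle between the vectors x − z₁ and z₀ − z₁ is at most φ). Then the distance from x to the closed segment [z₀, z₁] is at most (h/2)·tan(φ). -/
/-!
Let `z₀ + t • (z₁ - z₀)` be the foot of the perpendicular `w` from `x` to the line `z₀z₁`. In the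
right triangle with apex `z₀`, `‖w‖ = t h tan θ₀ ≤ t h tan φ`; seen from `z₁` likewise
`‖w‖ ≤ (1 - t) h tan φ`. Both cones force `0 < t < 1`, so the foot lies on the segment, and adding
the two bounds gives `2 ‖w‖ ≤ h tan φ`.
-/

open Real InnerProductGeometry
open scoped RealInnerProductSpace

section

variable {E : Type*} [NormedAddCommGroup E] [InnerProductSpace ℝ E]

theorem InnerProductGeometry.inner_pos_of_angle_lt_pi_div_two {x y : E} (h : angle x y < π / 2) :
    0 < ⟪x, y⟫ := by
  have hx : x ≠ 0 := by rintro rfl; simp at h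
  have hy : y ≠ 0 := by rintro rfl; simp at h
  rw [← cos_angle_mul_norm_mul_norm]
  have := cos_pos_of_mem_Ioo ⟨by linarith [angle_nonneg x y, pi_pos], h⟩
  positivity

theorem norm_sub_smul_le_mul_tan_of_angle_le {u v : E} {t φ : ℝ} (hperp : ⟪v - t • u, u⟫ = 0)
    (hφ : φ < π / 2) (hangle : angle v u ≤ φ) :
    0 < t ∧ ‖v - t • u‖ ≤ t * ‖u‖ * tan φ := by
  have hinner : ⟪v, u⟫ = t * ‖u‖ ^ 2 := by
    rw [inner_sub_left, real_inner_smul_left, real_inner_self_eq_norm_sq] at hperp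
    linarith
  have hpos := inner_pos_of_angle_lt_pi_div_two (hangle.trans_lt hφ)
  have hu : u ≠ 0 := by rintro rfl; simp at hpos
  have ht : 0 < t := pos_of_mul_pos_left (hinner ▸ hpos) (by positivity)
  refine ⟨ht, ?_⟩
  have htan := tan_angle_add_mul_norm_of_inner_eq_zero (x := t • u) (y := v - t • u)
    (by rw [real_inner_comm, real_inner_smul_right, hperp, mul_zero])
    (Or.inl (smul_ne_zero ht.ne' hu))
  rw [add_sub_cancel, angle_comm, angle_smul_right_of_pos _ _ ht, norm_smul,
    Real.norm_of_nonneg ht.le] at htan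
  rw [← htan, mul_comm]
  gcongr
  have hneg : -(π / 2) < angle v u := by linarith [angle_nonneg v u, pi_pos]
  exact strictMonoOn_tan.monotoneOn ⟨hneg, hangle.trans_lt hφ⟩ ⟨hneg.trans_le hangle, hφ⟩ hangle

theorem exists_mem_segment_two_mul_dist_le_of_angle_le {z₀ z₁ x : E} {φ : ℝ} (hz : z₀ ≠ z₁)
    (hφ : φ < π / 2) (h₀ : angle (x - z₀) (z₁ - z₀) ≤ φ) (h₁ : angle (x - z₁) (z₀ - z₁) ≤ φ) :
    ∃ p ∈ segment ℝ z₀ z₁, 2 * dist x p ≤ ‖z₁ - z₀‖ * tan φ := by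
  have hu : ‖z₁ - z₀‖ ^ 2 ≠ 0 := pow_ne_zero 2 (norm_ne_zero_iff.mpr (sub_ne_zero.mpr hz.symm))
  set t := ⟪x - z₀, z₁ - z₀⟫ / ‖z₁ - z₀‖ ^ 2 with ht
  have hperp : ⟪(x - z₀) - t • (z₁ - z₀), z₁ - z₀⟫ = 0 := by
    rw [inner_sub_left, real_inner_smul_left, real_inner_self_eq_norm_sq, ht,
      div_mul_cancel₀ _ hu, sub_self]
  have hflip : (x - z₁) - (1 - t) • (z₀ - z₁) = (x - z₀) - t • (z₁ - z₀) := by module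
  have hperp' : ⟪(x - z₁) - (1 - t) • (z₀ - z₁), z₀ - z₁⟫ = 0 := by
    rw [hflip, ← neg_sub z₁ z₀, inner_neg_right, hperp, neg_zero]
  obtain ⟨ht₀, hle₀⟩ := norm_sub_smul_le_mul_tan_of_angle_le hperp hφ h₀
  obtain ⟨ht₁, hle₁⟩ := norm_sub_smul_le_mul_tan_of_angle_le hperp' hφ h₁
  rw [hflip, norm_sub_rev z₀ z₁] at hle₁
  refine ⟨z₀ + t • (z₁ - z₀), ?_, ?_⟩
  · rw [segment_eq_image']
    exact ⟨t, ⟨ht₀.le, by linarith⟩, rfl⟩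
  · rw [dist_eq_norm, sub_add_eq_sub_sub]
    linarith

end

theorem cone_intersection_dist_to_segment_general
    (n : ℕ) (z₀ z₁ : EuclideanSpace ℝ (Fin n)) (hz : z₀ ≠ z₁)
    (φ : ℝ) (hφ0 : 0 ≤ φ) (hφ : φ < Real.pi / 2)
    (x : EuclideanSpace ℝ (Fin n))
    (hx0 : x = z₀ ∨ InnerProductGeometry.angle (x - z₀) (z₁ - z₀) ≤ φ)
    (hx1 : x = z₁ ∨ InnerProductGeometry.angle (x - z₁) (z₀ - z₁) ≤ φ) :
    Metric.infDist x (segment ℝ z₀ z₁) ≤ (‖z₁ - z₀‖ / 2) * Real.tan φ := by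
  have hbound : 0 ≤ (‖z₁ - z₀‖ / 2) * tan φ :=
    mul_nonneg (by positivity) (tan_nonneg_of_nonneg_of_le_pi_div_two hφ0 hφ.le)
  rcases hx0 with rfl | h₀
  · rwa [Metric.infDist_zero_of_mem (left_mem_segment ℝ x z₁)]
  rcases hx1 with rfl | h₁
  · rwa [Metric.infDist_zero_of_mem (right_mem_segment ℝ z₀ x)]
  obtain ⟨p, hp, hdist⟩ := exists_mem_segment_two_mul_dist_le_of_angle_le hz hφ h₀ h₁
  linarith [Metric.infDist_le_dist_of_mem (x := x) hp]

theorem cone_intersection_dist_to_segment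
    (n : ℕ) (hn : 1 ≤ n) (z₀ z₁ : EuclideanSpace ℝ (Fin n)) (hz : z₀ ≠ z₁)
    (φ : ℝ) (hφ0 : 0 ≤ φ) (hφ : φ < Real.pi / 2)
    (x : EuclideanSpace ℝ (Fin n))
    (hx0 : x = z₀ ∨ InnerProductGeometry.angle (x - z₀) (z₁ - z₀) ≤ φ)
    (hx1 : x = z₁ ∨ InnerProductGeometry.angle (x - z₁) (z₀ - z₁) ≤ φ) :
    Metric.infDist x (segment ℝ z₀ z₁) ≤ (‖z₁ - z₀‖ / 2) * Real.tan φ :=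
  cone_intersection_dist_to_segment_general n z₀ z₁ hz φ hφ0 hφ x hx0 hx1
end

section
/- Let n ≥ 1, let z₀, z₁ be distinct points of Euclidean space ℝⁿ, let h = ‖z₁ − z₀‖, and let φ be a real number with 0 ≤ φ < π/2. Let γ : [0,1] → ℝⁿ be a continuous curve with γ(0) = z₀ and γ(1) = z₁ such that for every t ∈ [0,1]: (γ(t) = z₀ or the undirected angle between the vectors γ(t) − z₀ and z₁ − z₀ is at most φ) and (γ(t) = z₁ or the undirected angle between the vectors γ(t) − z₁ and z₀ − z₁ is at most φ). Then the Hausdorff distance between the image of γ and the closed segment [z₀, z₁] is at most (h/2)·tan(φ). -/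
/-!
Project the curve orthogonally onto the line `z₀z₁`. A point of the cone at `z₀` whose foot lies
at distance `d` from `z₀` is within `d * tan φ` of that foot, and likewise for `z₁`; the foot of a
point of both cones lies on the segment, within `h / 2` of one of the apexes. Conversely, along the
curve the foot moves continuously from `z₀` to `z₁`, so by the intermediate value theorem every
point of the segment is the foot of a point of the curve.
-/

open Real Set InnerProductGeometry AffineMap
open scoped RealInnerProductSpace

variable {E : Type*} [NormedAddCommGroup E] [InnerProductSpace ℝ E]

theorem norm_sub_inner_div_smul_sq {u : E} (hu : u ≠ 0) (v : E) :
    ‖v - (⟪v, u⟫ / ‖u‖ ^ 2) • u‖ ^ 2 = ‖v‖ ^ 2 - ⟪v, u⟫ ^ 2 / ‖u‖ ^ 2 := by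
  have : ‖u‖ ≠ 0 := norm_ne_zero_iff.2 hu
  rw [norm_sub_sq_real, real_inner_smul_right, norm_smul, Real.norm_eq_abs, mul_pow, sq_abs]
  field_simp
  ring

theorem norm_mul_norm_mul_cos_le_inner_of_angle_le {v u : E} {φ : ℝ} (hφ : φ ≤ π)
    (h : angle v u ≤ φ) : ‖v‖ * ‖u‖ * cos φ ≤ ⟪v, u⟫ := by
  rw [← cos_angle_mul_norm_mul_norm, mul_comm (cos _)]
  gcongr
  exact cos_le_cos_of_nonneg_of_le_pi (angle_nonneg v u) hφ h

theorem inner_nonneg_of_angle_le {v u : E} {φ : ℝ} (hφ : φ ≤ π / 2) (h : angle v u ≤ φ) :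
    0 ≤ ⟪v, u⟫ := by
  have hcos : 0 ≤ cos φ :=
    cos_nonneg_of_neg_pi_div_two_le_of_le (by linarith [angle_nonneg v u, pi_pos]) hφ
  exact (by positivity : 0 ≤ ‖v‖ * ‖u‖ * cos φ).trans
    (norm_mul_norm_mul_cos_le_inner_of_angle_le (by linarith [pi_pos]) h)

theorem norm_sub_inner_div_smul_le_of_angle_le {v u : E} {φ : ℝ} (hφ : φ < π / 2)
    (h : angle v u ≤ φ) : ‖v - (⟪v, u⟫ / ‖u‖ ^ 2) • u‖ ≤ ⟪v, u⟫ / ‖u‖ * tan φ := by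
  have hu : u ≠ 0 := by
    rintro rfl
    rw [angle_zero_right] at h
    linarith
  have hu₀ : 0 < ‖u‖ := norm_pos_iff.2 hu
  have hcos : 0 < cos φ :=
    cos_pos_of_mem_Ioo ⟨by linarith [angle_nonneg v u, pi_pos], hφ⟩
  have hinner : ‖v‖ * cos φ ≤ ⟪v, u⟫ / ‖u‖ := by
    rw [le_div_iff₀ hu₀, mul_right_comm]
    exact norm_mul_norm_mul_cos_le_inner_of_angle_le (by linarith [pi_pos]) h
  have htan : 0 ≤ tan φ :=
    tan_nonneg_of_nonneg_of_le_pi_div_two ((angle_nonneg v u).trans h) hφ.le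
  have hsq : ‖v‖ ^ 2 * cos φ ^ 2 ≤ (⟪v, u⟫ / ‖u‖) ^ 2 := by
    rw [← mul_pow]
    exact pow_le_pow_left₀ (by positivity) hinner 2
  have hpyth := one_add_tan_sq_mul_cos_sq_eq_one hcos.ne'
  apply le_of_pow_le_pow_left₀ two_ne_zero
    (mul_nonneg (div_nonneg (inner_nonneg_of_angle_le hφ.le h) hu₀.le) htan)
  rw [norm_sub_inner_div_smul_sq hu, mul_pow, ← div_pow]
  nlinarith [mul_le_mul_of_nonneg_left hsq (by positivity : 0 ≤ 1 + tan φ ^ 2)]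

/-- `lineMap a b (lineProjParam a b x)` is the foot of the perpendicular from `x` to line `ab`. -/
noncomputable def lineProjParam (a b x : E) : ℝ := ⟪x - a, b - a⟫ / ‖b - a‖ ^ 2

/-- The closed cone with apex `a`, axis through `b` and half-angle `φ`; the apex is listed
separately because `angle 0 _ = π / 2`. -/
def angleCone (a b : E) (φ : ℝ) : Set E := {x | x = a ∨ angle (x - a) (b - a) ≤ φ}

section lineProjParam

variable {a b : E}

@[simp]
theorem lineProjParam_self_left (b : E) : lineProjParam a b a = 0 := by
  simp [lineProjParam]

theorem lineProjParam_self_right (hab : a ≠ b) : lineProjParam a b b = 1 := by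
  rw [lineProjParam, real_inner_self_eq_norm_sq,
    div_self (pow_ne_zero 2 (norm_ne_zero_iff.2 (sub_ne_zero.2 hab.symm)))]

theorem lineProjParam_swap (hab : a ≠ b) (x : E) :
    lineProjParam b a x = 1 - lineProjParam a b x := by
  have : ‖b - a‖ ≠ 0 := norm_ne_zero_iff.2 (sub_ne_zero.2 hab.symm)
  have hx : x - b = (x - a) - (b - a) := by abel
  rw [lineProjParam, lineProjParam, ← neg_sub b a, norm_neg, inner_neg_right, hx, inner_sub_left,
    real_inner_self_eq_norm_sq]
  field_simp
  ring

theorem continuous_lineProjParam (a b : E) : Continuous (lineProjParam a b) := by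
  unfold lineProjParam
  fun_prop

theorem lineProjParam_mul_norm (a b x : E) :
    lineProjParam a b x * ‖b - a‖ = ⟪x - a, b - a⟫ / ‖b - a‖ := by
  rcases eq_or_ne ‖b - a‖ 0 with h | h
  · simp [lineProjParam, h]
  · rw [lineProjParam]
    field_simp

theorem dist_lineMap_lineProjParam (a b x : E) :
    dist x (lineMap a b (lineProjParam a b x)) =
      ‖(x - a) - (⟪x - a, b - a⟫ / ‖b - a‖ ^ 2) • (b - a)‖ := by
  rw [dist_eq_norm, lineMap_apply_module', lineProjParam, sub_add_eq_sub_sub_swap]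

variable {φ : ℝ} {x : E}

theorem lineProjParam_nonneg_of_mem_angleCone (hφ : φ < π / 2) (hx : x ∈ angleCone a b φ) :
    0 ≤ lineProjParam a b x := by
  rcases hx with rfl | h
  · simp
  · exact div_nonneg (inner_nonneg_of_angle_le hφ.le h) (by positivity)

theorem dist_lineMap_lineProjParam_le_of_mem_angleCone (hφ : φ < π / 2)
    (hx : x ∈ angleCone a b φ) :
    dist x (lineMap a b (lineProjParam a b x)) ≤ lineProjParam a b x * ‖b - a‖ * tan φ := by
  rcases hx with rfl | h
  · simp
  · rw [dist_lineMap_lineProjParam, lineProjParam_mul_norm]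
    exact norm_sub_inner_div_smul_le_of_angle_le hφ h

theorem lineProjParam_mem_Icc_of_mem_angleCone (hab : a ≠ b) (hφ : φ < π / 2)
    (h₀ : x ∈ angleCone a b φ) (h₁ : x ∈ angleCone b a φ) : lineProjParam a b x ∈ Icc 0 1 := by
  have := lineProjParam_nonneg_of_mem_angleCone hφ h₁
  rw [lineProjParam_swap hab] at this
  exact ⟨lineProjParam_nonneg_of_mem_angleCone hφ h₀, by linarith⟩

theorem dist_lineMap_lineProjParam_le_of_mem_angleCone_inter (hab : a ≠ b) (hφ0 : 0 ≤ φ)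
    (hφ : φ < π / 2) (h₀ : x ∈ angleCone a b φ) (h₁ : x ∈ angleCone b a φ) :
    dist x (lineMap a b (lineProjParam a b x)) ≤ ‖b - a‖ / 2 * tan φ := by
  have htan : 0 ≤ tan φ := tan_nonneg_of_nonneg_of_le_pi_div_two hφ0 hφ.le
  have hd₀ := dist_lineMap_lineProjParam_le_of_mem_angleCone hφ h₀
  have hd₁ := dist_lineMap_lineProjParam_le_of_mem_angleCone hφ h₁
  rw [lineProjParam_swap hab, lineMap_apply_one_sub, norm_sub_rev] at hd₁
  rcases le_total (lineProjParam a b x) (1 / 2) with hs | hs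
  · calc _ ≤ _ := hd₀
      _ ≤ 1 / 2 * ‖b - a‖ * tan φ := by gcongr
      _ = _ := by ring
  · calc _ ≤ _ := hd₁
      _ ≤ 1 / 2 * ‖b - a‖ * tan φ := by gcongr; linarith
      _ = _ := by ring

end lineProjParam

theorem cone_curve_hausdorffDist_segment_general
    (n : ℕ) (z₀ z₁ : EuclideanSpace ℝ (Fin n)) (hz : z₀ ≠ z₁)
    (φ : ℝ) (hφ0 : 0 ≤ φ) (hφ : φ < Real.pi / 2)
    (γ : ℝ → EuclideanSpace ℝ (Fin n))
    (hγc : ContinuousOn γ (Set.Icc 0 1)) (hγ0 : γ 0 = z₀) (hγ1 : γ 1 = z₁)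
    (hcone : ∀ t ∈ Set.Icc (0 : ℝ) 1,
      (γ t = z₀ ∨ InnerProductGeometry.angle (γ t - z₀) (z₁ - z₀) ≤ φ) ∧
      (γ t = z₁ ∨ InnerProductGeometry.angle (γ t - z₁) (z₀ - z₁) ≤ φ)) :
    Metric.hausdorffDist (γ '' Set.Icc (0 : ℝ) 1) (segment ℝ z₀ z₁)
      ≤ (‖z₁ - z₀‖ / 2) * Real.tan φ := by
  have hclose (t) (ht : t ∈ Icc (0 : ℝ) 1) :
      dist (γ t) (lineMap z₀ z₁ (lineProjParam z₀ z₁ (γ t))) ≤ ‖z₁ - z₀‖ / 2 * tan φ :=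
    dist_lineMap_lineProjParam_le_of_mem_angleCone_inter hz hφ0 hφ (hcone t ht).1 (hcone t ht).2
  rw [segment_eq_image_lineMap]
  refine Metric.hausdorffDist_le_of_mem_dist
    (mul_nonneg (by positivity) (tan_nonneg_of_nonneg_of_le_pi_div_two hφ0 hφ.le)) ?_ ?_
  · rintro _ ⟨t, ht, rfl⟩
    exact ⟨_, mem_image_of_mem _
      (lineProjParam_mem_Icc_of_mem_angleCone hz hφ (hcone t ht).1 (hcone t ht).2), hclose t ht⟩
  · rintro _ ⟨s, hs, rfl⟩
    have hsurj : Icc (lineProjParam z₀ z₁ (γ 0)) (lineProjParam z₀ z₁ (γ 1)) ⊆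
        (lineProjParam z₀ z₁ ∘ γ) '' Icc 0 1 :=
      intermediate_value_Icc zero_le_one ((continuous_lineProjParam z₀ z₁).comp_continuousOn hγc)
    rw [hγ0, hγ1, lineProjParam_self_left, lineProjParam_self_right hz] at hsurj
    obtain ⟨t, ht, hts⟩ := hsurj hs
    exact ⟨γ t, mem_image_of_mem γ ht, by rw [dist_comm, ← hts]; exact hclose t ht⟩

theorem cone_curve_hausdorffDist_segment
    (n : ℕ) (hn : 1 ≤ n) (z₀ z₁ : EuclideanSpace ℝ (Fin n)) (hz : z₀ ≠ z₁)
    (φ : ℝ) (hφ0 : 0 ≤ φ) (hφ : φ < Real.pi / 2)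
    (γ : ℝ → EuclideanSpace ℝ (Fin n))
    (hγc : ContinuousOn γ (Set.Icc 0 1)) (hγ0 : γ 0 = z₀) (hγ1 : γ 1 = z₁)
    (hcone : ∀ t ∈ Set.Icc (0 : ℝ) 1,
      (γ t = z₀ ∨ InnerProductGeometry.angle (γ t - z₀) (z₁ - z₀) ≤ φ) ∧
      (γ t = z₁ ∨ InnerProductGeometry.angle (γ t - z₁) (z₀ - z₁) ≤ φ)) :
    Metric.hausdorffDist (γ '' Set.Icc (0 : ℝ) 1) (segment ℝ z₀ z₁)
      ≤ (‖z₁ - z₀‖ / 2) * Real.tan φ :=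
  cone_curve_hausdorffDist_segment_general n z₀ z₁ hz φ hφ0 hφ γ hγc hγ0 hγ1 hcone
end
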